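/- arXiv:math/0610706 — 3 statements merged into one kernel-verified Lean document; each statement's English description precedes it below -/
import Mathlib

section
/- Let h and g be analytic on 𝔻 and suppose f = h + conj∘g is sense-preserving and locally univalent on 𝔻 (i.e. |g′(z)| < |h′(z)| for all z ∈ 𝔻). Then for β ∈ ℝ, f is injective on 𝔻 with f(𝔻) convex in the direction e^{iβ} if and only if the analytic function φ = h − e^{2iβ}·g is injective on 𝔻 with φ(𝔻) convex in the direction e^{iβ}. -/
/-
Rotating by `e^{-iβ}` reduces everything to horizontal convexity, with `f = h + conj g` and
`φ = h - g`. These have the same imaginary part, so horizontal lines are matched: if `u` is one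
of them and `u(𝔻)` is horizontally convex, the preimage under `u` of a horizontal segment is a
curve along which the real part of the other map `v` is strictly increasing. This is a
pointwise statement about derivatives, checked via the inverse function theorem: with
`A = h'(z)`, `B = g'(z)`, the rate of increase is `|A - B|² / (|A|² - |B|²)` in one direction
and `(|A|² - |B|²) / |A - B|²` in the other, both positive because `|B| < |A|`. Strict
monotonicity gives injectivity of `v`, and the intermediate value theorem gives convexity.
-/

open Complex Set

noncomputable section

/-- The open unit disk in the complex plane. -/
def 𝔻 : Set ℂ := {z : ℂ | ‖z‖ < 1}

/-- A set `Ω ⊆ ℂ` is convex in the direction `e^{iβ}` if for every `a ∈ ℂ` the set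
`{t ∈ ℝ : a + t·e^{iβ} ∈ Ω}` is an interval (order-connected). -/
def ConvexInDir (β : ℝ) (Ω : Set ℂ) : Prop :=
  ∀ a : ℂ, ({t : ℝ | a + (t : ℂ) * Complex.exp ((β : ℂ) * Complex.I) ∈ Ω}).OrdConnected

open Filter Topology Function ComplexConjugate

theorem HasStrictFDerivAt.exists_curve_eventually_eq_add_smul {E : Type*} [NormedAddCommGroup E]
    [NormedSpace ℝ E] [FiniteDimensional ℝ E] {u : E → E} {L : E →L[ℝ] E} {z : E}
    (hu : HasStrictFDerivAt u L z) (hL : Injective L) (m : E) :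
    ∃ χ : ℝ → E, χ 0 = z ∧ HasDerivAt χ m 0 ∧ ∀ᶠ t in 𝓝 0, u (χ t) = u z + t • L m := by
  let e := (LinearEquiv.ofInjectiveEndo (L : E →ₗ[ℝ] E) hL).toContinuousLinearEquiv
  have he : HasStrictFDerivAt u (e : E →L[ℝ] E) z := hu
  have hline : HasDerivAt (fun t : ℝ => u z + t • L m) (L m) 0 := by
    simpa using ((hasDerivAt_id (0 : ℝ)).smul_const (L m)).const_add (u z)
  have hline0 : u z + (0 : ℝ) • L m = u z := by simp
  refine ⟨he.localInverse u e z ∘ fun t => u z + t • L m, by simp, ?_, ?_⟩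
  · have hinv := he.to_localInverse.hasFDerivAt
    rw [← hline0] at hinv
    convert hinv.comp_hasDerivAt 0 hline using 1
    exact (e.symm_apply_apply m).symm
  · have hinv := he.eventually_right_inverse
    rw [← hline0] at hinv
    exact hline.continuousAt.eventually hinv

theorem convexInDir_zero_iff {Ω : Set ℂ} :
    ConvexInDir 0 Ω ↔ ∀ a : ℂ, {t : ℝ | a + t ∈ Ω}.OrdConnected := by
  simp [ConvexInDir]

theorem strictMonoOn_of_forall_hasDerivAt_pos {T : Set ℝ} {F : ℝ → ℝ} (hT : T.OrdConnected)
    (hF : ∀ r ∈ T, ∃ c > 0, HasDerivAt F c r) : StrictMonoOn F T := by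
  refine strictMonoOn_of_deriv_pos hT.convex (fun r hr => ?_) (fun r hr => ?_)
  · obtain ⟨c, -, hc⟩ := hF r hr
    exact hc.continuousAt.continuousWithinAt
  · obtain ⟨c, hc, hd⟩ := hF r (interior_subset hr)
    rwa [hd.deriv]

-- `m` is the velocity of the curve along which `u` moves to the right at unit speed; along it
-- the real part of `v` must increase.
def HorizontalFlowIncreasesRe (u v : ℂ → ℂ) (z : ℂ) : Prop :=
  ∃ (L M : ℂ →L[ℝ] ℂ) (m : ℂ), HasStrictFDerivAt u L z ∧ Injective L ∧ L m = 1 ∧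
    HasFDerivAt v M z ∧ 0 < (M m).re

theorem HorizontalFlowIncreasesRe.exists_curve {u v : ℂ → ℂ} {z : ℂ} {D : Set ℂ}
    (h : HorizontalFlowIncreasesRe u v z) (hD : D ∈ 𝓝 z) :
    ∃ χ : ℝ → ℂ, χ 0 = z ∧ (∀ᶠ t in 𝓝 0, χ t ∈ D ∧ u (χ t) = u z + t) ∧
      ∃ c > 0, HasDerivAt (fun t => (v (χ t)).re) c 0 := by
  obtain ⟨L, M, m, hu, hL, hm, hv, hpos⟩ := h
  obtain ⟨χ, hχ0, hχ, hχu⟩ := hu.exists_curve_eventually_eq_add_smul hL m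
  refine ⟨χ, hχ0, ?_, (M m).re, hpos, ?_⟩
  · have hχD : ∀ᶠ t in 𝓝 0, χ t ∈ D := hχ.continuousAt.eventually_mem (hχ0 ▸ hD)
    filter_upwards [hχD, hχu] with t htD htu
    rw [hm, Complex.real_smul, mul_one] at htu
    exact ⟨htD, htu⟩
  · rw [← hχ0] at hv
    exact reCLM.hasFDerivAt.comp_hasDerivAt 0 (hv.comp_hasDerivAt 0 hχ)

section Horizontal

variable {D : Set ℂ} {u v : ℂ → ℂ}

theorem exists_hasDerivAt_re_comp_invFunOn (hD : IsOpen D) (hu : InjOn u D)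
    (hflow : ∀ z ∈ D, HorizontalFlowIncreasesRe u v z) {a : ℂ} {r : ℝ} (hr : a + r ∈ u '' D) :
    ∃ c > 0, HasDerivAt (fun s : ℝ => (v (invFunOn u D (a + s))).re) c r := by
  set z := invFunOn u D (a + r)
  have hz : z ∈ D := invFunOn_mem hr
  have huz : u z = a + r := invFunOn_eq hr
  obtain ⟨χ, -, hχ, c, hc, hχd⟩ := (hflow z hz).exists_curve (hD.mem_nhds hz)
  refine ⟨c, hc, ?_⟩
  have hshift : HasDerivAt (fun s : ℝ => (v (χ (s - r))).re) c r :=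
    HasDerivAt.comp_sub_const r r (by rwa [sub_self])
  apply hshift.congr_of_eventuallyEq
  have hχr : ∀ᶠ s in 𝓝 r, χ (s - r) ∈ D ∧ u (χ (s - r)) = u z + (s - r : ℝ) :=
    tendsto_sub_nhds_zero_iff.mpr tendsto_id |>.eventually hχ
  filter_upwards [hχr] with s ⟨hsD, hsu⟩
  have hus : u (χ (s - r)) = a + s := by rw [hsu, huz]; push_cast; ring
  have hmem : ∃ x ∈ D, u x = a + s := ⟨_, hsD, hus⟩
  rw [hu (invFunOn_mem hmem) hsD (by rw [invFunOn_eq hmem, hus])]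

theorem exists_curve_of_im_eq (hD : IsOpen D) (hu : InjOn u D) (hconv : ConvexInDir 0 (u '' D))
    (him : ∀ z ∈ D, (u z).im = (v z).im) (hflow : ∀ z ∈ D, HorizontalFlowIncreasesRe u v z)
    {z₁ z₂ : ℂ} (hz₁ : z₁ ∈ D) (hz₂ : z₂ ∈ D) (h12 : (v z₁).im = (v z₂).im) :
    ∃ (s : ℝ) (Ψ : ℝ → ℂ), Ψ 0 = z₁ ∧ Ψ s = z₂ ∧
      (∀ r ∈ uIcc 0 s, Ψ r ∈ D ∧ (v (Ψ r)).im = (v z₁).im) ∧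
      StrictMonoOn (fun r => (v (Ψ r)).re) (uIcc 0 s) ∧
      ContinuousOn (fun r => (v (Ψ r)).re) (uIcc 0 s) := by
  set a := u z₁
  set s := (u z₂ - a).re
  have hs : u z₂ = a + s := by
    apply Complex.ext <;> simp [s, a, him z₁ hz₁, him z₂ hz₂, h12]
  set T := {r : ℝ | a + r ∈ u '' D}
  have hT : T.OrdConnected := convexInDir_zero_iff.mp hconv a
  have h0T : (0 : ℝ) ∈ T := ⟨z₁, hz₁, by simp [a]⟩
  have hsT : s ∈ T := ⟨z₂, hz₂, hs⟩
  have hsub : uIcc 0 s ⊆ T := hT.uIcc_subset h0T hsT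
  set Ψ := fun r : ℝ => invFunOn u D (a + r)
  have hΨ : ∀ r ∈ T, Ψ r ∈ D ∧ u (Ψ r) = a + r := fun r hr => ⟨invFunOn_mem hr, invFunOn_eq hr⟩
  have hderiv : ∀ r ∈ uIcc 0 s, ∃ c > 0, HasDerivAt (fun r => (v (Ψ r)).re) c r :=
    fun r hr => exists_hasDerivAt_re_comp_invFunOn hD hu hflow (hsub hr)
  refine ⟨s, Ψ, hu (hΨ 0 h0T).1 hz₁ (by simp [(hΨ 0 h0T).2, a]),
    hu (hΨ s hsT).1 hz₂ (by rw [(hΨ s hsT).2, hs]), fun r hr => ⟨(hΨ r (hsub hr)).1, ?_⟩,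
    strictMonoOn_of_forall_hasDerivAt_pos ordConnected_uIcc hderiv, fun r hr => ?_⟩
  · rw [← him _ (hΨ r (hsub hr)).1, (hΨ r (hsub hr)).2, ← him z₁ hz₁]
    simp [a]
  · obtain ⟨c, -, hc⟩ := hderiv r hr
    exact hc.continuousAt.continuousWithinAt

theorem injOn_and_convexInDir_zero_of_flow (hD : IsOpen D) (hu : InjOn u D)
    (hconv : ConvexInDir 0 (u '' D)) (him : ∀ z ∈ D, (u z).im = (v z).im)
    (hflow : ∀ z ∈ D, HorizontalFlowIncreasesRe u v z) :
    InjOn v D ∧ ConvexInDir 0 (v '' D) := by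
  refine ⟨fun z₁ hz₁ z₂ hz₂ hv => ?_, convexInDir_zero_iff.mpr fun a => ⟨?_⟩⟩
  · obtain ⟨s, Ψ, hΨ0, hΨs, -, hmono, -⟩ :=
      exists_curve_of_im_eq hD hu hconv him hflow hz₁ hz₂ (congrArg im hv)
    have hs : (0 : ℝ) = s :=
      hmono.injOn left_mem_uIcc right_mem_uIcc (by simp only [hΨ0, hΨs, hv])
    rw [← hΨ0, ← hΨs, hs]
  · rintro t₁ ⟨z₁, hz₁, hv₁⟩ t₂ ⟨z₂, hz₂, hv₂⟩ t ht
    obtain ⟨s, Ψ, hΨ0, hΨs, hΨ, -, hcont⟩ :=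
      exists_curve_of_im_eq hD hu hconv him hflow hz₁ hz₂ (by simp [hv₁, hv₂])
    have hmid : a.re + t ∈ uIcc (v (Ψ 0)).re (v (Ψ s)).re := by
      rw [hΨ0, hΨs, hv₁, hv₂]
      exact Icc_subset_uIcc ⟨by simpa using ht.1, by simpa using ht.2⟩
    obtain ⟨r, hr, hvr⟩ := intermediate_value_uIcc hcont hmid
    refine ⟨Ψ r, (hΨ r hr).1, Complex.ext ?_ ?_⟩
    · simpa using hvr
    · simp [(hΨ r hr).2, hv₁]

end Horizontal

noncomputable def addConjCLM (A B : ℂ) : ℂ →L[ℝ] ℂ :=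
  A • ContinuousLinearMap.id ℝ ℂ + (conjCLE : ℂ →L[ℝ] ℂ).comp (B • ContinuousLinearMap.id ℝ ℂ)

@[simp]
theorem addConjCLM_apply (A B w : ℂ) : addConjCLM A B w = A * w + conj (B * w) := by
  simp [addConjCLM]

theorem addConjCLM_injective {A B : ℂ} (hAB : ‖B‖ < ‖A‖) : Injective (addConjCLM A B) := by
  refine (injective_iff_map_eq_zero _).mpr fun w hw => ?_
  rw [addConjCLM_apply, add_eq_zero_iff_eq_neg] at hw
  have hnorm := congrArg norm hw
  rw [norm_neg, Complex.norm_conj, norm_mul, norm_mul] at hnorm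
  by_contra hw0
  exact hAB.ne' (mul_right_cancel₀ (norm_ne_zero_iff.mpr hw0) hnorm)

theorem HasStrictDerivAt.hasStrictFDerivAt_add_conj {h g : ℂ → ℂ} {A B z : ℂ}
    (hh : HasStrictDerivAt h A z) (hg : HasStrictDerivAt g B z) :
    HasStrictFDerivAt (fun w => h w + conj (g w)) (addConjCLM A B) z := by
  have hconj := (conjCLE : ℂ →L[ℝ] ℂ).hasStrictFDerivAt.comp z
    (hg.hasStrictFDerivAt.restrictScalars ℝ)
  refine ((hh.hasStrictFDerivAt.restrictScalars ℝ).add hconj).congr_fderiv ?_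
  ext w
  simp [mul_comm]

theorem normSq_lt_normSq_of_norm_lt {A B : ℂ} (hAB : ‖B‖ < ‖A‖) : normSq B < normSq A := by
  rw [normSq_eq_norm_sq, normSq_eq_norm_sq]
  exact pow_lt_pow_left₀ hAB (norm_nonneg B) two_ne_zero

section Providers

variable {h g : ℂ → ℂ} {A B z : ℂ}

theorem horizontalFlowIncreasesRe_add_conj_sub (hh : HasStrictDerivAt h A z)
    (hg : HasStrictDerivAt g B z) (hAB : ‖B‖ < ‖A‖) :
    HorizontalFlowIncreasesRe (fun w => h w + conj (g w)) (fun w => h w - g w) z := by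
  have hd : 0 < normSq A - normSq B := sub_pos.mpr (normSq_lt_normSq_of_norm_lt hAB)
  have hAB' : A - B ≠ 0 := sub_ne_zero.mpr fun h => hAB.ne (by rw [h])
  refine ⟨addConjCLM A B, _, conj (A - B) / (normSq A - normSq B : ℝ),
    hh.hasStrictFDerivAt_add_conj hg, addConjCLM_injective hAB, ?_,
    ((hh.sub hg).hasDerivAt.hasFDerivAt.restrictScalars ℝ), ?_⟩
  · have hd' : ((normSq A - normSq B : ℝ) : ℂ) ≠ 0 := by exact_mod_cast hd.ne'
    simp only [addConjCLM_apply, map_div₀, map_mul, map_sub, conj_conj, conj_ofReal]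
    field_simp
    push_cast
    rw [← mul_conj, ← mul_conj]
    ring
  · have hM : (conj (A - B) / (normSq A - normSq B : ℝ)) • (A - B)
        = ((normSq (A - B) / (normSq A - normSq B) : ℝ) : ℂ) := by
      rw [smul_eq_mul, div_mul_eq_mul_div, mul_comm, mul_conj]
      push_cast
      ring
    simp only [ContinuousLinearMap.coe_restrictScalars', ContinuousLinearMap.toSpanSingleton_apply,
      hM, ofReal_re]
    exact div_pos (normSq_pos.mpr hAB') hd

theorem horizontalFlowIncreasesRe_sub_add_conj (hh : HasStrictDerivAt h A z)
    (hg : HasStrictDerivAt g B z) (hAB : ‖B‖ < ‖A‖) :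
    HorizontalFlowIncreasesRe (fun w => h w - g w) (fun w => h w + conj (g w)) z := by
  have hd : 0 < normSq A - normSq B := sub_pos.mpr (normSq_lt_normSq_of_norm_lt hAB)
  have hAB' : A - B ≠ 0 := sub_ne_zero.mpr fun h => hAB.ne (by rw [h])
  refine ⟨_, addConjCLM A B, (A - B)⁻¹, (hh.sub hg).hasStrictFDerivAt.restrictScalars ℝ,
    fun w₁ w₂ hw => mul_right_cancel₀ hAB' (by simpa using hw), by simp [hAB'],
    (hh.hasStrictFDerivAt_add_conj hg).hasFDerivAt, ?_⟩
  have hre : (A * (A - B)⁻¹ + conj (B * (A - B)⁻¹)).re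
      = (normSq A - normSq B) / normSq (A - B) := by
    rw [add_re, conj_re, ← add_re, ← add_mul, ← div_eq_mul_inv, div_re, normSq_apply A,
      normSq_apply B]
    simp only [add_re, sub_re, add_im, sub_im]
    ring
  rw [addConjCLM_apply, hre]
  exact div_pos hd (normSq_pos.mpr hAB')

end Providers

theorem injOn_add_conj_and_convexInDir_zero_iff {D : Set ℂ} {h g : ℂ → ℂ} (hD : IsOpen D)
    (hh : DifferentiableOn ℂ h D) (hg : DifferentiableOn ℂ g D)
    (hloc : ∀ z ∈ D, ‖deriv g z‖ < ‖deriv h z‖) :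
    (InjOn (fun z => h z + conj (g z)) D ∧ ConvexInDir 0 ((fun z => h z + conj (g z)) '' D)) ↔
      (InjOn (fun z => h z - g z) D ∧ ConvexInDir 0 ((fun z => h z - g z) '' D)) := by
  have hstrict {F : ℂ → ℂ} (hF : DifferentiableOn ℂ F D) {z : ℂ} (hz : z ∈ D) :
      HasStrictDerivAt F (deriv F z) z :=
    (hF.analyticAt (hD.mem_nhds hz)).hasStrictDerivAt
  have him (z : ℂ) : (h z + conj (g z)).im = (h z - g z).im := by simp [sub_eq_add_neg]
  constructor
  · rintro ⟨hinj, hconv⟩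
    exact injOn_and_convexInDir_zero_of_flow hD hinj hconv (fun z _ => him z) fun z hz =>
      horizontalFlowIncreasesRe_add_conj_sub (hstrict hh hz) (hstrict hg hz) (hloc z hz)
  · rintro ⟨hinj, hconv⟩
    exact injOn_and_convexInDir_zero_of_flow hD hinj hconv (fun z _ => (him z).symm) fun z hz =>
      horizontalFlowIncreasesRe_sub_add_conj (hstrict hh hz) (hstrict hg hz) (hloc z hz)

theorem injOn_and_convexInDir_iff_rotate (β : ℝ) (u : ℂ → ℂ) (D : Set ℂ) :
    (InjOn u D ∧ ConvexInDir β (u '' D)) ↔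
      (InjOn (fun z => exp (-(β * I)) * u z) D ∧
        ConvexInDir 0 ((fun z => exp (-(β * I)) * u z) '' D)) := by
  have hE : exp (-(β * I)) * exp (β * I) = 1 := by rw [← exp_add]; simp
  have hline (a : ℂ) : {t : ℝ | a + t * exp (β * I) ∈ u '' D} =
      {t : ℝ | exp (-(β * I)) * a + t ∈ (fun z => exp (-(β * I)) * u z) '' D} := by
    ext t
    refine exists_congr fun z => and_congr_right fun _ => ?_
    rw [show exp (-(β * I)) * a + t = exp (-(β * I)) * (a + t * exp (β * I)) by
      linear_combination t * hE.symm, mul_right_inj' (exp_ne_zero _)]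
  refine and_congr ⟨(mul_right_injective₀ (exp_ne_zero _)).comp_injOn,
    fun hu _ hx _ hy hxy => hu hx hy (congrArg (exp (-(β * I)) * ·) hxy)⟩ ?_
  rw [convexInDir_zero_iff, (mul_left_surjective₀ (exp_ne_zero (-(β * I)))).forall]
  simp only [ConvexInDir, hline]

/-- (Clunie–Sheil-Small) A sense-preserving locally univalent harmonic mapping
`f = h + conj ∘ g` on `𝔻` is injective with image convex in the direction `e^{iβ}` if and only
if the analytic function `φ = h − e^{2iβ}·g` is injective with image convex in the direction
`e^{iβ}`. -/
theorem stmt2 (h g : ℂ → ℂ)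
    (hh : DifferentiableOn ℂ h 𝔻) (hg : DifferentiableOn ℂ g 𝔻)
    (hloc : ∀ z ∈ 𝔻, ‖deriv g z‖ < ‖deriv h z‖)
    (β : ℝ) (f φ : ℂ → ℂ)
    (hf : f = fun z => h z + (starRingEnd ℂ) (g z))
    (hφ : φ = fun z => h z - Complex.exp (2 * (β : ℂ) * Complex.I) * g z) :
    (Set.InjOn f 𝔻 ∧ ConvexInDir β (f '' 𝔻)) ↔
    (Set.InjOn φ 𝔻 ∧ ConvexInDir β (φ '' 𝔻)) := by
  subst hf hφ
  have hD : IsOpen 𝔻 := isOpen_lt continuous_norm continuous_const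
  set E := exp (β * I)
  set E' := exp (-(β * I))
  have hf : (fun z => E' * (h z + conj (g z))) = fun z => E' * h z + conj (E * g z) := by
    have hconj : conj E = E' := by simp [E, E', ← exp_conj]
    ext z
    rw [map_mul, hconj, mul_add]
  have hφ : (fun z => E' * (h z - exp (2 * β * I) * g z)) = fun z => E' * h z - E * g z := by
    have hE2 : E' * exp (2 * β * I) = E := by simp only [E, E', ← exp_add]; ring_nf
    ext z
    linear_combination (-g z) * hE2
  rw [injOn_and_convexInDir_iff_rotate β, injOn_and_convexInDir_iff_rotate β, hf, hφ]
  refine injOn_add_conj_and_convexInDir_zero_iff hD (hh.const_mul E') (hg.const_mul E)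
    fun z hz => ?_
  have hz' := hD.mem_nhds hz
  rw [deriv_const_mul _ (hh.differentiableAt hz'), deriv_const_mul _ (hg.differentiableAt hz'),
    norm_mul, norm_mul, norm_exp_ofReal_mul_I]
  simpa [E', norm_exp] using hloc z hz
end
end

section
/- The harmonic Enneper mapping f_E(z) = z + conj(z)³/3 is injective on 𝔻 and f_E(𝔻) is convex in the direction of the imaginary axis. -/
open Complex Set

noncomputable section

/-- A set `Ω ⊆ ℂ` is convex in the direction of the imaginary axis if for every `a ∈ ℂ` the set
`{t ∈ ℝ : a + t·i ∈ Ω}` is an interval (order-connected). -/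
def ConvexImDir (Ω : Set ℂ) : Prop :=
  ∀ a : ℂ, ({t : ℝ | a + (t : ℂ) * Complex.I ∈ Ω}).OrdConnected

/-- The harmonic Enneper mapping `f_E(z) = z + conj(z)³/3`. -/
def fE : ℂ → ℂ := fun z => z + ((starRingEnd ℂ) z) ^ 3 / 3

/-! Write `f_E = h + conj g` with `h = id` and `g z = z³/3`. If `f_E z = f_E w` then
`‖z - w‖ = ‖g z - g w‖ = ‖z - w‖ ‖z² + zw + w²‖ / 3`, which is impossible for distinct points
of `𝔻` because there `‖z² + zw + w²‖ < 3`.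

For `z = x + iy` we have `3 Re f_E z = x³ + 3(1 - y²)x`, strictly increasing in `x` when
`|y| ≤ 1`. So the level set `{z ∈ 𝔻 | Re f_E z = c}` is a graph `x = φ(y)`, where `φ(y)` is the
root of a family of strictly increasing functions depending continuously on `y`, hence
continuous. The root lies in `𝔻` iff `9c² < 16(1 - y²)³`, a condition that survives when `|y|`
decreases, so the heights form an interval and the level set is connected. Its image under
`Im f_E` is the vertical slice of `f_E(𝔻)` over `c`, hence an interval. -/

open ComplexConjugate

theorem continuousOn_of_strictMono_of_apply_eq {α β Y : Type*} [LinearOrder α]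
    [TopologicalSpace α] [OrderTopology α] [LinearOrder β] [TopologicalSpace β]
    [OrderClosedTopology β] [TopologicalSpace Y] {F : α → Y → β} {φ : Y → α} {s : Set Y} {b : β}
    (hmono : ∀ y ∈ s, StrictMono (F · y)) (hcont : ∀ x, ContinuousOn (F x) s)
    (hroot : ∀ y ∈ s, F (φ y) y = b) : ContinuousOn φ s := by
  intro y hy
  refine tendsto_order.2 ⟨fun x hx => ?_, fun x hx => ?_⟩
  · have hlt : F x y < b := hroot y hy ▸ hmono y hy hx
    filter_upwards [(hcont x y hy).eventually_lt_const hlt, self_mem_nhdsWithin] with y' h hy'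
    exact (hmono y' hy').lt_iff_lt.1 (by rwa [hroot y' hy'])
  · have hlt : b < F x y := hroot y hy ▸ hmono y hy hx
    filter_upwards [(hcont x y hy).eventually_const_lt hlt, self_mem_nhdsWithin] with y' h hy'
    exact (hmono y' hy').lt_iff_lt.1 (by rwa [hroot y' hy'])

theorem cubic_strictMono {p : ℝ} (hp : 0 ≤ p) : StrictMono fun x : ℝ => x ^ 3 + 3 * p * x := by
  intro a b hab
  nlinarith [sq_nonneg (a + b), mul_pos (sub_pos.2 hab) (sub_pos.2 hab),
    mul_nonneg (sub_pos.2 hab).le hp]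

theorem cubic_surjective {p : ℝ} (hp : 0 ≤ p) :
    Function.Surjective fun x : ℝ => x ^ 3 + 3 * p * x := by
  intro c
  set M := |c| + 1
  have hM : M ≤ M ^ 3 := le_self_pow₀ (le_add_of_nonneg_left (abs_nonneg c)) three_ne_zero
  have hpM : 0 ≤ p * M := mul_nonneg hp (by positivity)
  refine intermediate_value_univ (-M) M (by fun_prop) ⟨?_, ?_⟩ <;>
    nlinarith [neg_abs_le c, le_abs_self c]

theorem sq_lt_iff_of_cubic_eq {p c x : ℝ} (hp : 0 < p) (hx : x ^ 3 + 3 * p * x = 3 * c) :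
    x ^ 2 < p ↔ 9 * c ^ 2 < 16 * p ^ 3 := by
  -- `9c² = u(u + 3p)²` with `u = x²`, and `u(u + 3p)² - 16p³` vanishes at `u = p`
  have hfac : 9 * c ^ 2 - 16 * p ^ 3 = (x ^ 2 - p) * (x ^ 4 + 7 * p * x ^ 2 + 16 * p ^ 2) := by
    linear_combination (-(3 * c + x ^ 3 + 3 * p * x)) * hx
  have hpos : 0 < x ^ 4 + 7 * p * x ^ 2 + 16 * p ^ 2 := by positivity
  rw [← sub_neg, ← sub_neg (a := 9 * c ^ 2), hfac]
  exact ⟨fun h => mul_neg_of_neg_of_pos h hpos, fun h => neg_of_mul_neg_left h hpos.le⟩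

theorem injOn_add_conj_of_norm_sub_lt {s : Set ℂ} {g : ℂ → ℂ}
    (hg : ∀ z ∈ s, ∀ w ∈ s, z ≠ w → ‖g z - g w‖ < ‖z - w‖) :
    InjOn (fun z => z + conj (g z)) s := by
  intro z hz w hw h
  by_contra hne
  have : z - w = conj (g w - g z) := by simp only at h; rw [map_sub]; linear_combination h
  have := hg z hz w hw hne
  rw [‹z - w = _›, Complex.norm_conj, norm_sub_rev] at this
  exact lt_irrefl _ this

theorem mem_𝔻_iff (z : ℂ) : z ∈ 𝔻 ↔ z.re ^ 2 + z.im ^ 2 < 1 := by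
  rw [𝔻, mem_ofPred_eq, ← sq_lt_one_iff₀ (norm_nonneg z), Complex.sq_norm, normSq_apply]
  ring_nf

theorem norm_cube_sub_cube_lt {z w : ℂ} (hz : z ∈ 𝔻) (hw : w ∈ 𝔻) (hne : z ≠ w) :
    ‖z ^ 3 / 3 - w ^ 3 / 3‖ < ‖z - w‖ := by
  have hz' : ‖z‖ < 1 := hz
  have hw' : ‖w‖ < 1 := hw
  have hlt : ‖z ^ 2 + z * w + w ^ 2‖ < 3 := calc
    ‖z ^ 2 + z * w + w ^ 2‖ ≤ ‖z‖ ^ 2 + ‖z‖ * ‖w‖ + ‖w‖ ^ 2 := by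
      grw [norm_add₃_le, norm_pow, norm_pow, norm_mul]
    _ < 3 := by nlinarith [norm_nonneg z, norm_nonneg w]
  rw [show z ^ 3 / 3 - w ^ 3 / 3 = (z - w) * ((z ^ 2 + z * w + w ^ 2) / 3) by ring, norm_mul,
    norm_div, Complex.norm_ofNat]
  have : 0 < ‖z - w‖ := norm_pos_iff.2 (sub_ne_zero.2 hne)
  nlinarith

theorem fE_injOn : InjOn fE 𝔻 := by
  have : fE = fun z => z + conj (z ^ 3 / 3) := by
    ext z; simp [fE, Complex.conj_ofNat]
  rw [this]
  exact injOn_add_conj_of_norm_sub_lt fun z hz w hw => norm_cube_sub_cube_lt hz hw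

theorem three_mul_fE_re (z : ℂ) : 3 * (fE z).re = z.re ^ 3 + 3 * (1 - z.im ^ 2) * z.re := by
  simp only [fE, pow_succ, pow_zero, one_mul, add_re, div_ofNat_re, mul_re, conj_re, conj_im,
    mul_im]
  ring

theorem continuous_fE : Continuous fE := by
  unfold fE; fun_prop

theorem sq_le_or_sq_le_of_mem_uIcc {a b y : ℝ} (hy : y ∈ uIcc a b) :
    y ^ 2 ≤ a ^ 2 ∨ y ^ 2 ≤ b ^ 2 := by
  rcases mem_uIcc.1 hy with ⟨ha, hb⟩ | ⟨ha, hb⟩ <;> rcases le_total 0 y with h0 | h0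
  exacts [.inr (by nlinarith), .inl (by nlinarith), .inl (by nlinarith), .inr (by nlinarith)]

theorem exists_path_levelSet {c : ℝ} {z₁ z₂ : ℂ} (h₁ : z₁ ∈ {z ∈ 𝔻 | (fE z).re = c})
    (h₂ : z₂ ∈ {z ∈ 𝔻 | (fE z).re = c}) :
    ∃ γ : ℝ → ℂ, ContinuousOn γ (uIcc z₁.im z₂.im) ∧
      MapsTo γ (uIcc z₁.im z₂.im) {z ∈ 𝔻 | (fE z).re = c} ∧ γ z₁.im = z₁ ∧ γ z₂.im = z₂ := by
  have hbound : ∀ z ∈ {z ∈ 𝔻 | (fE z).re = c},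
      0 < 1 - z.im ^ 2 ∧ 9 * c ^ 2 < 16 * (1 - z.im ^ 2) ^ 3 := by
    rintro z ⟨hz, rfl⟩
    rw [mem_𝔻_iff] at hz
    have hp : 0 < 1 - z.im ^ 2 := by nlinarith [sq_nonneg z.re]
    exact ⟨hp, (sq_lt_iff_of_cubic_eq hp (three_mul_fE_re z).symm).1 (by linarith)⟩
  have hs : ∀ y ∈ uIcc z₁.im z₂.im, 0 < 1 - y ^ 2 ∧ 9 * c ^ 2 < 16 * (1 - y ^ 2) ^ 3 := by
    intro y hy
    obtain ⟨y', hy', hp, hc⟩ :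
        ∃ y', y ^ 2 ≤ y' ^ 2 ∧ 0 < 1 - y' ^ 2 ∧ 9 * c ^ 2 < 16 * (1 - y' ^ 2) ^ 3 :=
      (sq_le_or_sq_le_of_mem_uIcc hy).elim (fun h => ⟨_, h, hbound z₁ h₁⟩)
        (fun h => ⟨_, h, hbound z₂ h₂⟩)
    have hpp : 1 - y' ^ 2 ≤ 1 - y ^ 2 := by linarith
    exact ⟨hp.trans_le hpp, hc.trans_le (by gcongr)⟩
  choose! φ hφ using fun y (hy : y ∈ uIcc z₁.im z₂.im) =>
    cubic_surjective (hs y hy).1.le (3 * c)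
  beta_reduce at hφ
  have hφc : ContinuousOn φ (uIcc z₁.im z₂.im) :=
    continuousOn_of_strictMono_of_apply_eq (F := fun x y => x ^ 3 + 3 * (1 - y ^ 2) * x)
      (fun y hy => cubic_strictMono (hs y hy).1.le) (fun x => by fun_prop) hφ
  have hend : ∀ z ∈ {z ∈ 𝔻 | (fE z).re = c}, z.im ∈ uIcc z₁.im z₂.im →
      (⟨φ z.im, z.im⟩ : ℂ) = z := by
    rintro z ⟨-, hzc⟩ hz
    refine Complex.ext ((cubic_strictMono (hs _ hz).1.le).injective ?_) rfl
    rw [hφ _ hz, ← hzc, three_mul_fE_re]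
  refine ⟨fun y => ⟨φ y, y⟩,
    equivRealProdCLM.symm.continuous.comp_continuousOn (hφc.prodMk continuousOn_id),
    fun y hy => ⟨?_, ?_⟩, hend z₁ h₁ left_mem_uIcc, hend z₂ h₂ right_mem_uIcc⟩
  · have := (sq_lt_iff_of_cubic_eq (hs y hy).1 (hφ y hy)).2 (hs y hy).2
    rw [mem_𝔻_iff]
    linarith
  · linarith [hφ y hy, three_mul_fE_re ⟨φ y, y⟩]

theorem isPreconnected_levelSet (c : ℝ) : IsPreconnected {z ∈ 𝔻 | (fE z).re = c} := by
  refine isPreconnected_of_forall_pair fun z₁ h₁ z₂ h₂ => ?_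
  obtain ⟨γ, hγc, hγL, hγ₁, hγ₂⟩ := exists_path_levelSet h₁ h₂
  exact ⟨γ '' uIcc z₁.im z₂.im, hγL.image_subset, ⟨z₁.im, left_mem_uIcc, hγ₁⟩,
    ⟨z₂.im, right_mem_uIcc, hγ₂⟩, isPreconnected_uIcc.image γ hγc⟩

theorem convexImDir_fE_image : ConvexImDir (fE '' 𝔻) := by
  intro a
  have hconn := (isPreconnected_levelSet a.re).image (fun z => (fE z).im - a.im)
    ((continuous_im.comp continuous_fE).sub continuous_const).continuousOn
  suffices h : {t : ℝ | a + t * I ∈ fE '' 𝔻} =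
      (fun z => (fE z).im - a.im) '' {z ∈ 𝔻 | (fE z).re = a.re} by
    rw [h]; exact hconn.ordConnected
  refine Set.ext fun t => ⟨?_, ?_⟩
  · rintro ⟨z, hz, hfz⟩
    exact ⟨z, ⟨hz, by simp [hfz]⟩, by simp [hfz]⟩
  · rintro ⟨z, ⟨hz, hre⟩, rfl⟩
    exact ⟨z, hz, Complex.ext (by simp [hre]) (by simp)⟩

/-- The harmonic Enneper mapping is injective on `𝔻` and its image is convex in the direction
of the imaginary axis. -/
theorem stmt7 : Set.InjOn fE 𝔻 ∧ ConvexImDir (fE '' 𝔻) :=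
  ⟨fE_injOn, convexImDir_fE_image⟩
end
end

section
/- The harmonic Scherk mapping f_S = h_S + conj∘g_S, where h_S(z) = (1/4)·log((1+z)/(1−z)) + (i/4)·log((i−z)/(i+z)) and g_S(z) = (1/4)·log((1+z)/(1−z)) − (i/4)·log((i−z)/(i+z)) (principal branches), is injective on 𝔻 and f_S(𝔻) is convex in the direction of the imaginary axis. -/
open Complex Set

noncomputable section

/-- Analytic part `h_S` of the harmonic Scherk mapping. -/
def hS : ℂ → ℂ := fun z =>
  (1 / 4) * Complex.log ((1 + z) / (1 - z)) +
    (Complex.I / 4) * Complex.log ((Complex.I - z) / (Complex.I + z))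

/-- Co-analytic part `g_S` of the harmonic Scherk mapping. -/
def gS : ℂ → ℂ := fun z =>
  (1 / 4) * Complex.log ((1 + z) / (1 - z)) -
    (Complex.I / 4) * Complex.log ((Complex.I - z) / (Complex.I + z))

/-- The harmonic Scherk mapping `f_S = h_S + conj ∘ g_S`. -/
def fS : ℂ → ℂ := fun z => hS z + (starRingEnd ℂ) (gS z)

/-!
With `w = 2z / (1 + |z|²)`, the map from the Poincaré to the Beltrami–Klein model of the disk
(a bijection of `𝔻`), one has `|(1 + z) / (1 - z)|² = (1 + Re w) / (1 - Re w)`, and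
`(i - z) / (i + z) = (1 + iz) / (1 - iz)` turns the second logarithm into the same expression at
`iz`. Hence `f_S(z) = (artanh (Re w) - i artanh (Im w)) / 2`: after a bijection of the disk, `f_S`
acts on the two coordinates separately by an injective continuous function. This gives
injectivity, and a vertical line meets `f_S(𝔻)` in the continuous image of a chord of the disk,
which is an interval.
-/

open Real

lemma artanh_neg_eq_neg_artanh (x : ℝ) : artanh (-x) = -artanh x := by
  rw [artanh, artanh, ← Real.log_inv, ← Real.sqrt_inv, inv_div, sub_neg_eq_add, ← sub_eq_add_neg]

lemma continuousOn_artanh : ContinuousOn artanh (Ioo (-1) 1) := by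
  refine ContinuousOn.log ?_ fun x hx => (sqrt_pos.2 (div_pos ?_ ?_)).ne'
  · refine (ContinuousOn.div (by fun_prop) (by fun_prop) fun x hx => ?_).sqrt
    exact (sub_pos.2 hx.2).ne'
  · linarith [hx.1]
  · linarith [hx.2]

lemma convex_disk : Convex ℝ 𝔻 := by
  rw [show 𝔻 = Metric.ball (0 : ℂ) 1 by ext; simp [𝔻]]
  exact convex_ball 0 1

lemma re_mem_Ioo_of_mem_disk {z : ℂ} (hz : z ∈ 𝔻) : z.re ∈ Ioo (-1) 1 :=
  abs_lt.1 ((abs_re_le_norm z).trans_lt hz)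

lemma im_mem_Ioo_of_mem_disk {z : ℂ} (hz : z ∈ 𝔻) : z.im ∈ Ioo (-1) 1 :=
  abs_lt.1 ((abs_im_le_norm z).trans_lt hz)

section SeparatedCoordinates

variable {Ω : Set ℂ} {p q : ℝ → ℝ}

lemma injOn_mk_re_im (hp : InjOn p (re '' Ω)) (hq : InjOn q (im '' Ω)) :
    InjOn (fun w : ℂ => (⟨p w.re, q w.im⟩ : ℂ)) Ω := fun _ h₁ _ h₂ h =>
  Complex.ext (hp (mem_image_of_mem _ h₁) (mem_image_of_mem _ h₂) (congrArg re h))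
    (hq (mem_image_of_mem _ h₁) (mem_image_of_mem _ h₂) (congrArg im h))

lemma convexImDir_image_mk_re_im (hΩ : Convex ℝ Ω) (hp : InjOn p (re '' Ω))
    (hq : ContinuousOn q (im '' Ω)) :
    ConvexImDir ((fun w : ℂ => (⟨p w.re, q w.im⟩ : ℂ)) '' Ω) := by
  intro a
  set K := {w ∈ Ω | p w.re = a.re}
  have hslice : {t : ℝ | a + t * I ∈ (fun w : ℂ => (⟨p w.re, q w.im⟩ : ℂ)) '' Ω}
      = (fun w => q w.im - a.im) '' K := by
    ext t
    constructor
    · rintro ⟨w, hw, hwt⟩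
      refine ⟨w, ⟨hw, by simpa using congrArg re hwt⟩, ?_⟩
      have him := congrArg im hwt
      simp only [add_im, mul_im, ofReal_re, ofReal_im, I_re, I_im] at him
      linarith
    · rintro ⟨w, ⟨hw, hre⟩, rfl⟩
      exact ⟨w, hw, Complex.ext (by simp [hre]) (by simp)⟩
  have hK : Convex ℝ K := by
    rintro w₁ ⟨h₁, e₁⟩ w₂ ⟨h₂, e₂⟩ s t hs ht hst
    have hre : w₁.re = w₂.re :=
      hp (mem_image_of_mem _ h₁) (mem_image_of_mem _ h₂) (e₁.trans e₂.symm)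
    refine ⟨hΩ h₁ h₂ hs ht hst, ?_⟩
    simp only [add_re, smul_re, smul_eq_mul, ← hre, ← add_mul, hst, one_mul, e₁]
  rw [hslice]
  refine (hK.isPreconnected.image _ ?_).ordConnected
  exact (hq.comp continuous_im.continuousOn fun w hw => mem_image_of_mem _ hw.1).sub
    continuousOn_const

end SeparatedCoordinates

def poincareToKlein (z : ℂ) : ℂ := (2 / (1 + ‖z‖ ^ 2)) • z

lemma poincareToKlein_re (z : ℂ) : (poincareToKlein z).re = 2 * z.re / (1 + ‖z‖ ^ 2) := by
  rw [poincareToKlein, smul_re, smul_eq_mul]; ring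

lemma norm_poincareToKlein (z : ℂ) : ‖poincareToKlein z‖ = 2 * ‖z‖ / (1 + ‖z‖ ^ 2) := by
  rw [poincareToKlein, norm_smul, Real.norm_of_nonneg (by positivity)]; ring

lemma poincareToKlein_I_mul_re (z : ℂ) :
    (poincareToKlein (I * z)).re = -(poincareToKlein z).im := by
  simp only [poincareToKlein, norm_mul, norm_I, one_mul, smul_re, smul_im, mul_re, I_re, I_im]
  ring

lemma mapsTo_poincareToKlein : MapsTo poincareToKlein 𝔻 𝔻 := by
  intro z (hz : ‖z‖ < 1)
  change ‖poincareToKlein z‖ < 1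
  rw [norm_poincareToKlein, div_lt_one (by positivity)]
  nlinarith [sq_nonneg (1 - ‖z‖)]

lemma injOn_poincareToKlein : InjOn poincareToKlein 𝔻 := by
  intro z₁ (h₁ : ‖z₁‖ < 1) z₂ (h₂ : ‖z₂‖ < 1) h
  have hnorm : ‖z₁‖ = ‖z₂‖ := by
    have := congrArg norm h
    rw [norm_poincareToKlein, norm_poincareToKlein, div_eq_div_iff (by positivity)
      (by positivity)] at this
    have hfac : (‖z₁‖ - ‖z₂‖) * (1 - ‖z₁‖ * ‖z₂‖) = 0 := by linear_combination this / 2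
    have hprod : ‖z₁‖ * ‖z₂‖ < 1 := by nlinarith [norm_nonneg z₁, norm_nonneg z₂]
    exact sub_eq_zero.1 ((mul_eq_zero.1 hfac).resolve_right (by linarith))
  rw [poincareToKlein, poincareToKlein, hnorm] at h
  exact smul_right_injective ℂ (by positivity) h

lemma surjOn_poincareToKlein : SurjOn poincareToKlein 𝔻 𝔻 := by
  intro w (hw : ‖w‖ < 1)
  -- the Klein-to-Poincaré map `w ↦ w / (1 + √(1 - |w|²))`
  set s := √(1 - ‖w‖ ^ 2)
  have hs : s ^ 2 = 1 - ‖w‖ ^ 2 := sq_sqrt (by nlinarith [norm_nonneg w])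
  have hs0 : 0 ≤ s := sqrt_nonneg _
  have hnorm : ‖(1 + s)⁻¹ • w‖ = ‖w‖ / (1 + s) := by
    rw [norm_smul, norm_inv, Real.norm_of_nonneg (by positivity), inv_mul_eq_div]
  refine ⟨(1 + s)⁻¹ • w, ?_, ?_⟩
  · change ‖(1 + s)⁻¹ • w‖ < 1
    rw [hnorm, div_lt_one (by positivity)]
    linarith
  · rw [poincareToKlein, hnorm, smul_smul]
    convert one_smul ℝ w
    field_simp
    linear_combination -hs

lemma bijOn_poincareToKlein : BijOn poincareToKlein 𝔻 𝔻 :=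
  ⟨mapsTo_poincareToKlein, injOn_poincareToKlein, surjOn_poincareToKlein⟩

lemma norm_one_add_div_one_sub (z : ℂ) :
    ‖(1 + z) / (1 - z)‖ = √((1 + (poincareToKlein z).re) / (1 - (poincareToKlein z).re)) := by
  have hn : 1 + ‖z‖ ^ 2 ≠ 0 := by positivity
  rw [norm_div, norm_def, norm_def, ← Real.sqrt_div (normSq_nonneg _), poincareToKlein_re,
    one_add_div hn, one_sub_div hn, div_div_div_cancel_right₀ hn, Complex.sq_norm]
  congr 2 <;> simp only [normSq_apply, add_re, add_im, sub_re, sub_im, one_re, one_im] <;> ring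

lemma fS_re (z : ℂ) : (fS z).re = artanh (poincareToKlein z).re / 2 := by
  have h : (fS z).re = Real.log ‖(1 + z) / (1 - z)‖ / 2 := by
    simp only [fS, hS, gS, add_re, sub_re, conj_re, mul_re, log_re, log_im, div_ofNat_re,
      div_ofNat_im, one_re, one_im, I_re, I_im]
    ring
  rw [h, norm_one_add_div_one_sub, artanh]

lemma fS_im (z : ℂ) : (fS z).im = -(artanh (poincareToKlein z).im / 2) := by
  have h : (fS z).im = Real.log ‖(I - z) / (I + z)‖ / 2 := by
    simp only [fS, hS, gS, add_im, sub_im, conj_im, mul_im, log_re, log_im, div_ofNat_re,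
      div_ofNat_im, one_re, one_im, I_re, I_im]
    ring
  have hψ : (I - z) / (I + z) = (1 + I * z) / (1 - I * z) := by
    rw [← mul_div_mul_left (I - z) (I + z) (neg_ne_zero.2 I_ne_zero)]
    congr 1 <;> linear_combination -I_sq
  rw [h, hψ, norm_one_add_div_one_sub, poincareToKlein_I_mul_re, ← artanh,
    artanh_neg_eq_neg_artanh]
  ring

lemma fS_eq (z : ℂ) :
    fS z = ⟨artanh (poincareToKlein z).re / 2, -(artanh (poincareToKlein z).im / 2)⟩ :=
  Complex.ext (fS_re z) (fS_im z)

/-- The harmonic Scherk mapping is injective on `𝔻` and its image is convex in the direction of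
the imaginary axis. -/
theorem stmt8 : Set.InjOn fS 𝔻 ∧ ConvexImDir (fS '' 𝔻) := by
  set p : ℝ → ℝ := fun s => artanh s / 2
  set q : ℝ → ℝ := fun s => -(artanh s / 2)
  have hfS : fS = (fun w : ℂ => (⟨p w.re, q w.im⟩ : ℂ)) ∘ poincareToKlein := funext fS_eq
  have hre : re '' 𝔻 ⊆ Ioo (-1) 1 := image_subset_iff.2 fun _ => re_mem_Ioo_of_mem_disk
  have him : im '' 𝔻 ⊆ Ioo (-1) 1 := image_subset_iff.2 fun _ => im_mem_Ioo_of_mem_disk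
  have hp : InjOn p (re '' 𝔻) := fun x hx y hy h =>
    artanh_injOn (hre hx) (hre hy) (by simpa [p] using h)
  have hq : InjOn q (im '' 𝔻) := fun x hx y hy h =>
    artanh_injOn (him hx) (him hy) (by simpa [q] using h)
  have hK := bijOn_poincareToKlein
  rw [hfS, image_comp, hK.image_eq]
  exact ⟨(injOn_mk_re_im hp hq).comp hK.injOn hK.mapsTo,
    convexImDir_image_mk_re_im convex_disk hp ((continuousOn_artanh.div_const 2).neg.mono him)⟩

end
end
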